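/- arXiv:1108.5647 — 3 statements merged into one kernel-verified Lean document; each statement's English description precedes it below -/
import Mathlib

section
/- Let k be a positive integer, let |φ_1⟩,…,|φ_k⟩ ∈ ℂ^N be orthonormal, and let |ψ_1⟩,…,|ψ_k⟩ be unit vectors with ‖|φ_i⟩ − |ψ_i⟩‖ ≤ η for each i. Let Y be the orthogonal projector onto span{|ψ_1⟩,…,|ψ_k⟩} and set X = (1/√k) Σ_i |φ_i⟩⟨φ_i|, Ȳ = Y/√(rank Y). Then ‖X − Ȳ‖_F ≤ √2 · η. -/
/-!
`X` and `Ȳ` both have unit Frobenius norm, so `‖X - Ȳ‖² = 2 - 2 Re tr(X Ȳ)` with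
`tr(X Ȳ) = (k · rank Y)^(-1/2) ∑ᵢ ⟨φᵢ|Y|φᵢ⟩`. As `1 - Y` is an orthogonal projector killing `ψᵢ`,
`1 - ⟨φᵢ|Y|φᵢ⟩ = ‖(1 - Y)(φᵢ - ψᵢ)‖² ≤ η²`; together with `rank Y ≤ k` this gives
`Re tr(X Ȳ) ≥ 1 - η²`.
-/

open Matrix

/-- The Frobenius norm of a complex matrix. -/
noncomputable def frobNorm {m : Type*} [Fintype m] (A : Matrix m m ℂ) : ℝ :=
  Real.sqrt ((A * Aᴴ).trace.re)

theorem inv_sqrt_mul_inv_sqrt_mul_self {c : ℝ} (hc : 0 < c) : (√c)⁻¹ * (√c)⁻¹ * c = 1 := by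
  rw [← mul_inv, Real.mul_self_sqrt hc.le, inv_mul_cancel₀ hc.ne']

theorem one_sub_le_inv_sqrt_mul_inv_sqrt_mul {k r t e : ℝ} (hr : 0 < r) (hrk : r ≤ k)
    (ht : 0 ≤ t) (hkt : k * (1 - e) ≤ t) : 1 - e ≤ (√k)⁻¹ * (√r)⁻¹ * t := by
  have hk : 0 < k := hr.trans_le hrk
  calc 1 - e = (√k)⁻¹ * (√k)⁻¹ * (k * (1 - e)) := by
        rw [← mul_assoc, inv_sqrt_mul_inv_sqrt_mul_self hk, one_mul]
    _ ≤ (√k)⁻¹ * (√k)⁻¹ * t := by gcongr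
    _ ≤ (√k)⁻¹ * (√r)⁻¹ * t := by gcongr

namespace Matrix

variable {n : Type*} [Fintype n]

theorem trace_eq_rank_of_isIdempotentElem {K : Type*} [Field K] [DecidableEq n]
    {A : Matrix n n K} (hA : IsIdempotentElem A) : A.trace = A.rank := by
  rw [← trace_toLin'_eq]
  exact ((LinearMap.isProj_range_iff_isIdempotentElem _).mpr (hA.map toLinAlgEquiv')).trace

theorem rank_le_card_of_mulVec_mem_span {K ι : Type*} [Field K] [Fintype ι]
    {A : Matrix n n K} {v : ι → n → K} (h : ∀ x, A *ᵥ x ∈ Submodule.span K (Set.range v)) :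
    A.rank ≤ Fintype.card ι :=
  calc A.rank ≤ Module.finrank K (Submodule.span K (Set.range v)) :=
        Submodule.finrank_mono (by rintro _ ⟨x, rfl⟩; exact h x)
    _ ≤ Fintype.card ι := finrank_range_le_card v

theorem rank_pos_of_mulVec_ne_zero {m K : Type*} [Field K] {A : Matrix m n K} {x : n → K}
    (h : A *ᵥ x ≠ 0) : 0 < A.rank :=
  Module.finrank_pos_iff_exists_ne_zero.mpr ⟨⟨A *ᵥ x, x, rfl⟩, fun h0 => h (congrArg Subtype.val h0)⟩

theorem trace_vecMulVec_mul {R : Type*} [CommSemiring R] (u v : n → R) (M : Matrix n n R) :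
    (vecMulVec u v * M).trace = v ⬝ᵥ (M *ᵥ u) := by
  rw [vecMulVec_mul, trace_vecMulVec, dotProduct_comm, dotProduct_mulVec]

theorem star_dotProduct_mulVec_eq_of_conjTranspose_mul_self {R : Type*} [CommRing R]
    [StarRing R] {P : Matrix n n R} (hP : Pᴴ * P = P) (x : n → R) :
    star x ⬝ᵥ (P *ᵥ x) = star (P *ᵥ x) ⬝ᵥ (P *ᵥ x) := by
  rw [star_mulVec, ← dotProduct_mulVec, mulVec_mulVec, hP]

theorem re_star_dotProduct_self (v : n → ℂ) :
    (star v ⬝ᵥ v).re = ∑ l, Complex.normSq (v l) := by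
  simp only [dotProduct, Pi.star_apply, Complex.re_sum, Complex.star_def, Complex.mul_re,
    Complex.conj_re, Complex.conj_im, Complex.normSq_apply]
  ring_nf

theorem re_star_dotProduct_mulVec_nonneg {P : Matrix n n ℂ} (hP : Pᴴ * P = P) (x : n → ℂ) :
    0 ≤ (star x ⬝ᵥ (P *ᵥ x)).re := by
  rw [star_dotProduct_mulVec_eq_of_conjTranspose_mul_self hP, re_star_dotProduct_self]
  exact Finset.sum_nonneg fun l _ => Complex.normSq_nonneg _

/-- With `Q = 1 - P`, which kills `w`: `⟨u, Q u⟩ = ⟨u - w, Q (u - w)⟩ ≤ ‖u - w‖²`. -/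
theorem IsHermitian.sub_le_re_star_dotProduct_mulVec {P : Matrix n n ℂ} (hP : P.IsHermitian)
    (hPP : P * P = P) {w : n → ℂ} (hw : P *ᵥ w = w) (u : n → ℂ) :
    (star u ⬝ᵥ u).re - (star (u - w) ⬝ᵥ (u - w)).re ≤ (star u ⬝ᵥ (P *ᵥ u)).re := by
  classical
  set Q : Matrix n n ℂ := 1 - P
  have hQQ : Qᴴ * Q = Q := by
    simp only [Q, conjTranspose_sub, conjTranspose_one, hP.eq, sub_mul, mul_sub, one_mul,
      mul_one, hPP]
    abel
  have hQw : Q *ᵥ w = 0 := by simp only [Q, sub_mulVec, one_mulVec, hw, sub_self]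
  have hQ (x : n → ℂ) : star x ⬝ᵥ x - star x ⬝ᵥ (P *ᵥ x) = star x ⬝ᵥ (Q *ᵥ x) := by
    simp only [Q, sub_mulVec, one_mulVec, dotProduct_sub]
  have key : star u ⬝ᵥ u - star u ⬝ᵥ (P *ᵥ u)
      = star (u - w) ⬝ᵥ (u - w) - star (u - w) ⬝ᵥ (P *ᵥ (u - w)) := by
    rw [hQ, hQ, star_dotProduct_mulVec_eq_of_conjTranspose_mul_self hQQ,
      star_dotProduct_mulVec_eq_of_conjTranspose_mul_self hQQ (u - w), mulVec_sub, hQw, sub_zero]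
  have hP_nonneg := re_star_dotProduct_mulVec_nonneg (by rw [hP.eq, hPP]) (u - w)
  have key_re := congrArg Complex.re key
  simp only [Complex.sub_re] at key_re
  linarith

theorem re_trace_sub_mul_conjTranspose_sub (A B : Matrix n n ℂ) :
    ((A - B) * (A - B)ᴴ).trace.re =
      (A * Aᴴ).trace.re + (B * Bᴴ).trace.re - 2 * (A * Bᴴ).trace.re := by
  have h : (B * Aᴴ).trace = star (A * Bᴴ).trace := by
    rw [← trace_conjTranspose, conjTranspose_mul, conjTranspose_conjTranspose]
  simp only [conjTranspose_sub, sub_mul, mul_sub, trace_sub, Complex.sub_re, h,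
    Complex.star_def, Complex.conj_re]
  ring

theorem trace_ofReal_smul_mul_conjTranspose_ofReal_smul (a b : ℝ) (A B : Matrix n n ℂ) :
    ((a : ℂ) • A * ((b : ℂ) • B)ᴴ).trace = (a * b : ℝ) * (A * Bᴴ).trace := by
  rw [conjTranspose_smul, smul_mul_assoc, mul_smul_comm, trace_smul, trace_smul, smul_smul]
  simp

theorem re_trace_inv_sqrt_smul_sub_inv_sqrt_smul (A B : Matrix n n ℂ) {a b : ℝ} (ha : 0 < a)
    (hb : 0 < b) (hA : (A * Aᴴ).trace = a) (hB : (B * Bᴴ).trace = b) :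
    let D := (√a : ℂ)⁻¹ • A - (√b : ℂ)⁻¹ • B
    (D * Dᴴ).trace.re = 2 - 2 * ((√a)⁻¹ * (√b)⁻¹ * (A * Bᴴ).trace.re) := by
  simp only [← Complex.ofReal_inv, re_trace_sub_mul_conjTranspose_sub,
    trace_ofReal_smul_mul_conjTranspose_ofReal_smul, hA, hB, Complex.re_ofReal_mul,
    Complex.ofReal_re]
  rw [inv_sqrt_mul_inv_sqrt_mul_self ha, inv_sqrt_mul_inv_sqrt_mul_self hb]
  ring

section Orthonormal

variable {ι : Type*} [Fintype ι] {φ : ι → n → ℂ}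

theorem trace_sum_vecMulVec_mul (M : Matrix n n ℂ) :
    ((∑ i, vecMulVec (φ i) (star (φ i))) * M).trace = ∑ i, star (φ i) ⬝ᵥ (M *ᵥ φ i) := by
  simp only [Finset.sum_mul, trace_sum, trace_vecMulVec_mul]

variable [DecidableEq ι]

theorem sum_vecMulVec_mulVec_of_orthonormal
    (hφ : ∀ i j, star (φ i) ⬝ᵥ φ j = if i = j then 1 else 0) (j : ι) :
    (∑ i, vecMulVec (φ i) (star (φ i))) *ᵥ φ j = φ j := by
  simp [sum_mulVec, vecMulVec_mulVec, hφ]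

theorem trace_sum_vecMulVec_mul_conjTranspose_self
    (hφ : ∀ i j, star (φ i) ⬝ᵥ φ j = if i = j then 1 else 0) :
    ((∑ i, vecMulVec (φ i) (star (φ i))) * (∑ i, vecMulVec (φ i) (star (φ i)))ᴴ).trace
      = Fintype.card ι := by
  simp [conjTranspose_sum, conjTranspose_vecMulVec, trace_sum_vecMulVec_mul,
    sum_vecMulVec_mulVec_of_orthonormal hφ, hφ]

end Orthonormal

end Matrix

/-- If `φ 1, …, φ k` are orthonormal, `ψ 1, …, ψ k` are unit vectors with
`‖φ i − ψ i‖ ≤ η`, `Y` is the orthogonal projector onto the span of the `ψ i`,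
`X = (1/√k) ∑ |φ i⟩⟨φ i|` and `Ȳ = Y / √(rank Y)`, then `‖X − Ȳ‖_F ≤ √2 · η`. -/
theorem normalized_projector_close_to_net_point
    (N k : ℕ) (hk : 0 < k) (η : ℝ) (hη : 0 ≤ η)
    (φ ψ : Fin k → (Fin N → ℂ))
    (hortho : ∀ i j, ∑ l, (starRingEnd ℂ) (φ i l) * φ j l = if i = j then 1 else 0)
    (hunit : ∀ i, ∑ l, Complex.normSq (ψ i l) = 1)
    (hclose : ∀ i, Real.sqrt (∑ l, Complex.normSq (φ i l - ψ i l)) ≤ η)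
    (Y : Matrix (Fin N) (Fin N) ℂ) (hYherm : Y.IsHermitian) (hYproj : Y * Y = Y)
    (hYrange : ∀ v : Fin N → ℂ, Y.mulVec v ∈ Submodule.span ℂ (Set.range ψ))
    (hYfix : ∀ v ∈ Submodule.span ℂ (Set.range ψ), Y.mulVec v = v) :
    frobNorm (((Real.sqrt k)⁻¹ : ℂ) • (∑ i, vecMulVec (φ i) (star (φ i)))
        - ((Real.sqrt Y.rank)⁻¹ : ℂ) • Y) ≤ Real.sqrt 2 * η := by
  set T := ∑ i, (star (φ i) ⬝ᵥ (Y *ᵥ φ i)).re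
  have hψfix (i : Fin k) : Y *ᵥ ψ i = ψ i := hYfix _ (Submodule.subset_span ⟨i, rfl⟩)
  have hrank_le : Y.rank ≤ k := by simpa using rank_le_card_of_mulVec_mem_span hYrange
  have hrank_pos : 0 < Y.rank := rank_pos_of_mulVec_ne_zero (x := ψ ⟨0, hk⟩) fun h => by
    rw [hψfix] at h; simpa [h] using hunit ⟨0, hk⟩
  have hterm (i : Fin k) : 1 - η ^ 2 ≤ (star (φ i) ⬝ᵥ (Y *ᵥ φ i)).re := by
    have key := hYherm.sub_le_re_star_dotProduct_mulVec hYproj (hψfix i) (φ i)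
    have hφ : (star (φ i) ⬝ᵥ φ i).re = 1 := by simp [dotProduct, hortho]
    have hdist := (Real.sqrt_le_left hη).mp (hclose i)
    rw [hφ, re_star_dotProduct_self] at key
    simp only [Pi.sub_apply] at key
    linarith
  have hT : k * (1 - η ^ 2) ≤ T := by
    simpa only [Finset.card_univ, Fintype.card_fin, nsmul_eq_mul]
      using Finset.card_nsmul_le_sum Finset.univ _ _ fun i _ => hterm i
  have hT_nonneg : 0 ≤ T := Finset.sum_nonneg fun i _ =>
    re_star_dotProduct_mulVec_nonneg (by rw [hYherm.eq, hYproj]) _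
  rw [frobNorm, re_trace_inv_sqrt_smul_sub_inv_sqrt_smul _ _ (by positivity) (by positivity)
      (by simpa using trace_sum_vecMulVec_mul_conjTranspose_self hortho)
      (by simpa [hYherm.eq, hYproj] using trace_eq_rank_of_isIdempotentElem hYproj),
    hYherm.eq, trace_sum_vecMulVec_mul, Complex.re_sum, Real.sqrt_le_left (by positivity),
    mul_pow, Real.sq_sqrt zero_le_two]
  linarith [one_sub_le_inv_sqrt_mul_inv_sqrt_mul (r := Y.rank) (by exact_mod_cast hrank_pos)
    (by exact_mod_cast hrank_le) hT_nonneg hT]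
end

section
/- Let g ∈ ℝ^{N³} be a vector, and let T be the associated 3-tensor (the matrix |g⟩⟨g| with entries zeroed whenever i=i', j=j', or k=k'). Then ‖T‖_{2,2,2} ≤ 64·(ln N)^{3/2}·max_{X,Y,Z} |⟨g| X⊗Y⊗Z |g⟩ − Tr(X⊗Y⊗Z)|, where the maximum runs over all triples of normalized projectors X, Y, Z on ℂ^N. -/
/-!
Zeroing the entries with `i = i'`, `j = j'` or `k = k'` replaces `X, Y, Z` by their off-diagonal
parts `X', Y', Z'`, which are still Hermitian of Frobenius norm at most `1`, and traceless. So the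
pairing equals `⟨g|X'⊗Y'⊗Z'|g⟩ - Tr(X'⊗Y'⊗Z')`, a trilinear form bounded by `M` on triples of
normalized projectors. Every Hermitian `A` with `‖A‖_F ≤ 1` is a real combination of normalized
projectors of `ℓ¹`-weight at most `2 √(1 + ln N) ≤ 4 √(ln N)`: split its spectrum into positive and
negative parts and write each as a layer cake `∑ₖ (νₖ - νₖ₊₁) Πₖ`, where `Πₖ` projects onto the
eigenvectors of the `k + 1` largest values. Its weight `∑ₖ (νₖ - νₖ₊₁) √(k + 1)` is bounded by Abel
summation and Cauchy–Schwarz by `‖ν‖₂ √(H_N)`. Trilinearity then yields the factor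
`(4 √(ln N))³ = 64 (ln N)^{3/2}`.
-/

open Matrix

/-- `X` is a normalized projector: an orthogonal projector of rank `k ≥ 1`
divided by `√k`. -/
def IsNormalizedProjector {N : ℕ} (X : Matrix (Fin N) (Fin N) ℂ) : Prop :=
  ∃ P : Matrix (Fin N) (Fin N) ℂ, P.IsHermitian ∧ P * P = P ∧ 1 ≤ P.rank ∧
    X = ((Real.sqrt P.rank)⁻¹ : ℂ) • P

/-- The triple Kronecker (tensor) product of three `N × N` matrices. -/
def kron3 {N : ℕ} (X Y Z : Matrix (Fin N) (Fin N) ℂ) :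
    Matrix (Fin N × Fin N × Fin N) (Fin N × Fin N × Fin N) ℂ :=
  fun p q => X p.1 q.1 * Y p.2.1 q.2.1 * Z p.2.2 q.2.2

/-- The matrix `T` built from `g`: `|g⟩⟨g|` with all entries having `i = i'`, `j = j'` or
`k = k'` zeroed out. -/
def gameTensor {N : ℕ} (g : Fin N × Fin N × Fin N → ℝ) :
    Matrix (Fin N × Fin N × Fin N) (Fin N × Fin N × Fin N) ℝ :=
  fun p q =>
    if p.1 ≠ q.1 ∧ p.2.1 ≠ q.2.1 ∧ p.2.2 ≠ q.2.2 then g p * g q else 0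

open Finset

lemma Real.sqrt_sub_sqrt_le_div {x y : ℝ} (hx : 0 ≤ x) (hxy : x ≤ y) (hy : 0 < y) :
    √y - √x ≤ (y - x) / √y := by
  rw [le_div_iff₀ (Real.sqrt_pos.2 hy), sub_mul, Real.mul_self_sqrt hy.le]
  nlinarith [Real.mul_self_sqrt hx, Real.sqrt_le_sqrt hxy, Real.sqrt_nonneg x]

lemma sq_posPart_le_sq (a : ℝ) : a⁺ ^ 2 ≤ a ^ 2 := by
  rcases le_total a 0 with h | h
  · simp [posPart_eq_zero.2 h, sq_nonneg]
  · rw [posPart_eq_self.2 h]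

lemma sum_range_ite_le_sub_succ_eq (ν : ℕ → ℝ) {m n : ℕ} (hmn : m ≤ n) (hn : ν n = 0) :
    ∑ k ∈ range n, (if m ≤ k then ν k - ν (k + 1) else 0) = ν m := by
  rw [← sum_filter, show (range n).filter (m ≤ ·) = Ico m n by ext; simp; omega,
    ← neg_inj, ← sum_neg_distrib]
  simpa [hn] using sum_Ico_sub ν hmn

lemma sum_sub_succ_mul_sqrt_le {ν : ℕ → ℝ} (hν : Antitone ν) {n : ℕ} (hn : ν n = 0) :
    ∑ k ∈ range n, (ν k - ν (k + 1)) * √(k + 1)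
      ≤ √(∑ k ∈ range n, ν k ^ 2) * √(harmonic n) := by
  have hν0 : ∀ k ∈ range n, 0 ≤ ν k := fun k hk => hn ▸ hν (mem_range.1 hk).le
  have hshift : ∑ k ∈ range n, ν (k + 1) * √(k + 1 : ℕ) = ∑ k ∈ range n, ν k * √k := by
    have h := sum_range_succ' (fun k => ν k * √k) n
    rw [sum_range_succ, hn] at h
    simpa using h.symm
  push_cast at hshift
  calc ∑ k ∈ range n, (ν k - ν (k + 1)) * √(k + 1)
      = ∑ k ∈ range n, ν k * (√(k + 1) - √k) := by
        simp only [sub_mul, mul_sub, sum_sub_distrib, hshift]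
    _ ≤ ∑ k ∈ range n, ν k * (1 / √(k + 1)) := by
        gcongr with k hk
        · exact hν0 k hk
        · simpa using Real.sqrt_sub_sqrt_le_div (x := k) (y := k + 1) (by positivity)
            (by linarith) (by positivity)
    _ ≤ √(∑ k ∈ range n, ν k ^ 2) * √(∑ k ∈ range n, (1 / √(k + 1)) ^ 2) :=
        Real.sum_mul_le_sqrt_mul_sqrt _ _ _
    _ = √(∑ k ∈ range n, ν k ^ 2) * √(harmonic n) := by
        congr 2
        simp only [harmonic, one_div, inv_pow, Rat.cast_sum, Rat.cast_inv, Rat.cast_natCast]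
        push_cast
        exact sum_congr rfl fun k _ => by rw [Real.sq_sqrt (by positivity)]

/-- `S k` indexes the `k + 1` largest entries of `μ`; `a k` is the gap between the `(k + 1)`-st
and the `(k + 2)`-nd largest of them. -/
lemma exists_layer_decomposition {n : ℕ} (μ : Fin n → ℝ) (hμ : 0 ≤ μ) :
    ∃ (a : ℕ → ℝ) (S : ℕ → Finset (Fin n)), (∀ k, 0 ≤ a k) ∧ (∀ k < n, #(S k) = k + 1) ∧
      (∀ j, μ j = ∑ k ∈ range n, if j ∈ S k then a k else 0) ∧
      ∑ k ∈ range n, a k * √(k + 1) ≤ √(∑ j, μ j ^ 2) * √(harmonic n) := by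
  set σ := Tuple.sort (fun j => -μ j)
  set ν : ℕ → ℝ := fun k => if h : k < n then μ (σ ⟨k, h⟩) else 0
  have hν : Antitone ν := by
    intro k l hkl
    by_cases hl : l < n
    · simpa [ν, hl, hkl.trans_lt hl] using Tuple.monotone_sort (fun j => -μ j) (show
        (⟨k, hkl.trans_lt hl⟩ : Fin n) ≤ ⟨l, hl⟩ from hkl)
    · simp only [ν, dif_neg hl]
      split_ifs
      exacts [hμ _, le_rfl]
  have hνn : ν n = 0 := dif_neg (lt_irrefl n)
  have hνσ : ∀ j, ν (σ.symm j) = μ j := fun j => by simp [ν]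
  refine ⟨fun k => ν k - ν (k + 1), fun k => univ.filter fun j => (σ.symm j : ℕ) ≤ k,
    fun k => sub_nonneg.2 (hν k.le_succ), fun k hk => ?_, fun j => ?_, ?_⟩
  · rw [card_equiv σ.symm (t := Iic ⟨k, hk⟩) (by simp [Fin.le_def]), Fin.card_Iic]
  · simpa [hνσ] using (sum_range_ite_le_sub_succ_eq ν (σ.symm j).isLt.le hνn).symm
  · have hsq : ∑ k ∈ range n, ν k ^ 2 = ∑ j, μ j ^ 2 := by
      rw [← Fin.sum_univ_eq_sum_range (fun k => ν k ^ 2), ← Equiv.sum_comp σ.symm]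
      simp [hνσ]
    simpa [hsq] using sum_sub_succ_mul_sqrt_le hν hνn

lemma re_trace_mul_conjTranspose_self {n : Type*} [Fintype n] (A : Matrix n n ℂ) :
    (A * Aᴴ).trace.re = ∑ i, ∑ j, ‖A i j‖ ^ 2 := by
  simp [trace, mul_apply, Complex.mul_conj, Complex.normSq_eq_norm_sq, - Complex.ofReal_pow]

lemma trace_conjStarAlgAut {n : Type*} [Fintype n] [DecidableEq n] (u : unitary (Matrix n n ℂ))
    (A : Matrix n n ℂ) : (Unitary.conjStarAlgAut ℂ _ u A).trace = A.trace := by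
  rw [Unitary.conjStarAlgAut_apply, trace_mul_cycle, Unitary.coe_star_mul_self, one_mul]

lemma Matrix.IsHermitian.re_trace_mul_conjTranspose_self {n : Type*} [Fintype n] [DecidableEq n]
    {A : Matrix n n ℂ} (hA : A.IsHermitian) :
    (A * Aᴴ).trace.re = ∑ i, hA.eigenvalues i ^ 2 := by
  have h := congrArg trace (congrArg₂ (· * ·) hA.spectral_theorem hA.spectral_theorem)
  rw [← map_mul, trace_conjStarAlgAut, diagonal_mul_diagonal] at h
  rw [hA.eq, h]
  simp [trace_diagonal, sq]

def Matrix.offDiag {n α : Type*} [DecidableEq n] [Zero α] (A : Matrix n n α) : Matrix n n α :=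
  of fun i j => if i = j then 0 else A i j

lemma Matrix.IsHermitian.offDiag {n : Type*} [DecidableEq n] {A : Matrix n n ℂ}
    (hA : A.IsHermitian) : A.offDiag.IsHermitian := by
  ext i j
  simp only [Matrix.offDiag, conjTranspose_apply, of_apply, eq_comm (a := j)]
  split_ifs
  · simp
  · exact hA.apply i j

lemma frobNorm_offDiag_le {n : Type*} [Fintype n] [DecidableEq n] (A : Matrix n n ℂ) :
    frobNorm A.offDiag ≤ frobNorm A := by
  unfold frobNorm
  rw [re_trace_mul_conjTranspose_self, re_trace_mul_conjTranspose_self]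
  gcongr with i _ j _
  simp only [Matrix.offDiag, of_apply]
  split_ifs <;> simp

section ProjectorDecomposition

variable {N : ℕ}

def HasProjectorDecomp (X : Matrix (Fin N) (Fin N) ℂ) (w : ℝ) : Prop :=
  ∃ (ι : Type) (_ : Fintype ι) (c : ι → ℝ) (P : ι → Matrix (Fin N) (Fin N) ℂ),
    (∀ i, IsNormalizedProjector (P i)) ∧ X = ∑ i, (c i : ℂ) • P i ∧ ∑ i, |c i| ≤ w

lemma hasProjectorDecomp_sum {α : Type} (s : Finset α) (c : α → ℝ)
    (P : α → Matrix (Fin N) (Fin N) ℂ) (hP : ∀ i ∈ s, IsNormalizedProjector (P i)) :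
    HasProjectorDecomp (∑ i ∈ s, (c i : ℂ) • P i) (∑ i ∈ s, |c i|) :=
  ⟨s, inferInstance, fun i => c i, fun i => P i, fun i => hP i i.2,
    (sum_coe_sort s _).symm, (sum_coe_sort s fun i => |c i|).le⟩

lemma IsNormalizedProjector.conj {X : Matrix (Fin N) (Fin N) ℂ} (hX : IsNormalizedProjector X)
    (u : unitary (Matrix (Fin N) (Fin N) ℂ)) :
    IsNormalizedProjector (Unitary.conjStarAlgAut ℂ _ u X) := by
  obtain ⟨P, hP, hPP, hrank, rfl⟩ := hX
  have hrank' : (Unitary.conjStarAlgAut ℂ _ u P).rank = P.rank := by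
    rw [Unitary.conjStarAlgAut_apply, rank_mul_eq_left_of_isUnit_det _ _ ?_,
      rank_mul_eq_right_of_isUnit_det _ _ ?_]
    exacts [UnitaryGroup.det_isUnit u, UnitaryGroup.det_isUnit (star u)]
  refine ⟨Unitary.conjStarAlgAut ℂ _ u P, ?_, ?_, hrank'.ge.trans' hrank, ?_⟩
  · exact hP.isSelfAdjoint.map (Unitary.conjStarAlgAut ℂ _ u)
  · rw [← map_mul, hPP]
  · rw [map_smul, hrank']

lemma isNormalizedProjector_diagonal_indicator {s : Finset (Fin N)} (hs : s.Nonempty) :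
    IsNormalizedProjector
      (((√(#s : ℝ))⁻¹ : ℂ) • diagonal fun j => if j ∈ s then (1 : ℂ) else 0) := by
  have hrank : (diagonal fun j => if j ∈ s then (1 : ℂ) else 0).rank = #s := by
    classical
    rw [rank_diagonal, Fintype.card_subtype]
    congr 1
    ext j
    simp
  refine ⟨_, ?_, ?_, hrank ▸ hs.card_pos, by rw [hrank]⟩
  · exact isHermitian_diagonal_of_self_adjoint _ (by ext j; simp [apply_ite])
  · simp [diagonal_mul_diagonal]

namespace HasProjectorDecomp

variable {X Y : Matrix (Fin N) (Fin N) ℂ} {v w : ℝ}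

lemma mono (hX : HasProjectorDecomp X v) (hvw : v ≤ w) : HasProjectorDecomp X w :=
  let ⟨ι, _, c, P, hP, hXP, hc⟩ := hX
  ⟨ι, _, c, P, hP, hXP, hc.trans hvw⟩

lemma nonneg (hX : HasProjectorDecomp X w) : 0 ≤ w :=
  let ⟨_, _, _, _, _, _, hc⟩ := hX
  (sum_nonneg fun _ _ => abs_nonneg _).trans hc

lemma sub (hX : HasProjectorDecomp X v) (hY : HasProjectorDecomp Y w) :
    HasProjectorDecomp (X - Y) (v + w) := by
  obtain ⟨ι, _, c, P, hP, rfl, hc⟩ := hX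
  obtain ⟨κ, _, d, Q, hQ, rfl, hd⟩ := hY
  refine ⟨ι ⊕ κ, inferInstance, Sum.elim c (-d), Sum.elim P Q, Sum.forall.2 ⟨hP, hQ⟩, ?_, ?_⟩
  · simp [Fintype.sum_sum_type, sub_eq_add_neg]
  · simpa [Fintype.sum_sum_type] using add_le_add hc hd

lemma conj (hX : HasProjectorDecomp X w) (u : unitary (Matrix (Fin N) (Fin N) ℂ)) :
    HasProjectorDecomp (Unitary.conjStarAlgAut ℂ _ u X) w := by
  obtain ⟨ι, _, c, P, hP, rfl, hc⟩ := hX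
  exact ⟨ι, _, c, fun i => Unitary.conjStarAlgAut ℂ _ u (P i), fun i => (hP i).conj u,
    by simp only [map_sum, map_smul], hc⟩

end HasProjectorDecomp

lemma hasProjectorDecomp_diagonal {μ : Fin N → ℝ} (hμ : 0 ≤ μ) :
    HasProjectorDecomp (diagonal fun j => (μ j : ℂ)) (√(∑ j, μ j ^ 2) * √(harmonic N)) := by
  obtain ⟨a, S, ha, hS, hμS, hbound⟩ := exists_layer_decomposition μ hμ
  have hSne : ∀ k ∈ range N, (S k).Nonempty := fun k hk => by
    simp [← card_pos, hS k (mem_range.1 hk)]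
  have hcoef : ∀ k ∈ range N, ((a k * √(k + 1) : ℝ) : ℂ) * ((√(#(S k) : ℝ))⁻¹ : ℂ) = a k :=
    fun k hk => by
      rw [hS k (mem_range.1 hk)]
      push_cast
      field_simp
  have hdecomp : (diagonal fun j => (μ j : ℂ)) = ∑ k ∈ range N, ((a k * √(k + 1) : ℝ) : ℂ) •
      (((√(#(S k) : ℝ))⁻¹ : ℂ) • diagonal fun j => if j ∈ S k then (1 : ℂ) else 0) := by
    ext i j
    simp only [diagonal_apply, Matrix.sum_apply, Matrix.smul_apply, smul_eq_mul]
    split_ifs with hij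
    · subst hij
      rw [hμS i, Complex.ofReal_sum]
      refine sum_congr rfl fun k hk => ?_
      rw [← mul_assoc, hcoef k hk]
      split_ifs <;> simp
    · simp
  rw [hdecomp]
  refine (hasProjectorDecomp_sum _ _ _
    fun k hk => isNormalizedProjector_diagonal_indicator (hSne k hk)).mono ?_
  simpa [abs_of_nonneg, ha] using hbound

lemma sqrt_sum_sq_mul_sqrt_harmonic_le {f g : Fin N → ℝ} (hfg : ∀ i, f i ^ 2 ≤ g i ^ 2)
    (hg : ∑ i, g i ^ 2 ≤ 1) : √(∑ i, f i ^ 2) * √(harmonic N) ≤ √(1 + Real.log N) := by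
  have hf : √(∑ i, f i ^ 2) ≤ 1 := Real.sqrt_le_one.2 ((sum_le_sum fun i _ => hfg i).trans hg)
  have hH : √(harmonic N : ℝ) ≤ √(1 + Real.log N) :=
    Real.sqrt_le_sqrt (harmonic_le_one_add_log N)
  nlinarith [Real.sqrt_nonneg (harmonic N : ℝ), Real.sqrt_nonneg (∑ i, f i ^ 2)]

lemma Matrix.IsHermitian.hasProjectorDecomp {A : Matrix (Fin N) (Fin N) ℂ} (hA : A.IsHermitian)
    (hfrob : frobNorm A ≤ 1) : HasProjectorDecomp A (2 * √(1 + Real.log N)) := by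
  set ev := hA.eigenvalues
  have hev : ∑ i, ev i ^ 2 ≤ 1 := by
    rw [← hA.re_trace_mul_conjTranspose_self]
    exact Real.sqrt_le_one.1 hfrob
  have hsplit : diagonal (RCLike.ofReal ∘ ev) =
      (diagonal fun j => ((ev⁺ j : ℝ) : ℂ)) - diagonal fun j => ((ev⁻ j : ℝ) : ℂ) := by
    rw [diagonal_sub]
    congr 1
    ext j
    simp [← Complex.ofReal_sub, posPart_sub_negPart]
  rw [hA.spectral_theorem, hsplit, two_mul]
  refine (((hasProjectorDecomp_diagonal (posPart_nonneg ev)).sub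
    (hasProjectorDecomp_diagonal (negPart_nonneg ev))).mono
      (add_le_add (sqrt_sum_sq_mul_sqrt_harmonic_le ?_ hev)
        (sqrt_sum_sq_mul_sqrt_harmonic_le ?_ hev))).conj _
  exacts [fun i => sq_posPart_le_sq (ev i),
    fun i => by simpa [posPart_neg] using sq_posPart_le_sq (-ev i)]

variable {E : Type*} [SeminormedAddCommGroup E] [NormedSpace ℂ E]

lemma HasProjectorDecomp.norm_map_le {X : Matrix (Fin N) (Fin N) ℂ} {w K : ℝ}
    (hX : HasProjectorDecomp X w) (f : Matrix (Fin N) (Fin N) ℂ →ₗ[ℂ] E)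
    (hf : ∀ P, IsNormalizedProjector P → ‖f P‖ ≤ K) (hK : 0 ≤ K) : ‖f X‖ ≤ w * K := by
  obtain ⟨ι, _, c, P, hP, rfl, hc⟩ := hX
  calc ‖f (∑ i, (c i : ℂ) • P i)‖ ≤ ∑ i, ‖(c i : ℂ) • f (P i)‖ := by
        simpa only [map_sum, map_smul] using norm_sum_le _ _
    _ ≤ ∑ i, |c i| * K := by
        gcongr with i
        rw [norm_smul, Complex.norm_real, Real.norm_eq_abs]
        exact mul_le_mul_of_nonneg_left (hf _ (hP i)) (abs_nonneg _)
    _ = (∑ i, |c i|) * K := (sum_mul ..).symm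
    _ ≤ w * K := mul_le_mul_of_nonneg_right hc hK

lemma HasProjectorDecomp.norm_trilinear_le {X Y Z : Matrix (Fin N) (Fin N) ℂ} {u v w M : ℝ}
    (hX : HasProjectorDecomp X u) (hY : HasProjectorDecomp Y v) (hZ : HasProjectorDecomp Z w)
    (F : Matrix (Fin N) (Fin N) ℂ →ₗ[ℂ] Matrix (Fin N) (Fin N) ℂ →ₗ[ℂ]
      Matrix (Fin N) (Fin N) ℂ →ₗ[ℂ] E)
    (hF : ∀ P Q R, IsNormalizedProjector P → IsNormalizedProjector Q →
      IsNormalizedProjector R → ‖F P Q R‖ ≤ M) (hM : 0 ≤ M) :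
    ‖F X Y Z‖ ≤ u * v * w * M := by
  have hPQZ : ∀ P Q, IsNormalizedProjector P → IsNormalizedProjector Q → ‖F P Q Z‖ ≤ w * M :=
    fun P Q hP hQ => hZ.norm_map_le (F P Q) (hF P Q · hP hQ) hM
  have hPYZ : ∀ P, IsNormalizedProjector P → ‖F P Y Z‖ ≤ v * (w * M) :=
    fun P hP => hY.norm_map_le ((F P).flip Z) (hPQZ P · hP) (mul_nonneg hZ.nonneg hM)
  simpa only [mul_assoc, LinearMap.flip_apply] using
    hX.norm_map_le ((F.flip Y).flip Z) hPYZ (mul_nonneg hY.nonneg (mul_nonneg hZ.nonneg hM))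

end ProjectorDecomposition

section GameForm

variable {N : ℕ}

noncomputable def gameForm (g : Fin N × Fin N × Fin N → ℝ) :
    Matrix (Fin N) (Fin N) ℂ →ₗ[ℂ] Matrix (Fin N) (Fin N) ℂ →ₗ[ℂ]
      Matrix (Fin N) (Fin N) ℂ →ₗ[ℂ] ℂ :=
  LinearMap.mk₂ ℂ (fun X Y =>
    { toFun := fun Z => (∑ p, ∑ q, ((g p * g q : ℝ) : ℂ) * kron3 X Y Z p q) - (kron3 X Y Z).trace
      map_add' := fun Z Z' => by
        simp only [kron3, Matrix.trace, Matrix.diag_apply, Matrix.add_apply, mul_add,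
          sum_add_distrib]
        ring
      map_smul' := fun c Z => by
        simp only [kron3, Matrix.trace, Matrix.diag_apply, Matrix.smul_apply, mul_smul_comm,
          ← smul_sum, ← smul_sub, RingHom.id_apply] })
    (fun X X' Y => by
      ext Z
      simp only [LinearMap.coe_mk, AddHom.coe_mk, LinearMap.add_apply, kron3, Matrix.trace,
        Matrix.diag_apply, Matrix.add_apply, add_mul, mul_add, sum_add_distrib]
      ring)
    (fun c X Y => by
      ext Z
      simp only [LinearMap.coe_mk, AddHom.coe_mk, LinearMap.smul_apply, kron3, Matrix.trace,
        Matrix.diag_apply, Matrix.smul_apply, mul_smul_comm, smul_mul_assoc, ← smul_sum,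
        ← smul_sub])
    (fun X Y Y' => by
      ext Z
      simp only [LinearMap.coe_mk, AddHom.coe_mk, LinearMap.add_apply, kron3, Matrix.trace,
        Matrix.diag_apply, Matrix.add_apply, add_mul, mul_add, sum_add_distrib]
      ring)
    (fun c X Y => by
      ext Z
      simp only [LinearMap.coe_mk, AddHom.coe_mk, LinearMap.smul_apply, kron3, Matrix.trace,
        Matrix.diag_apply, Matrix.smul_apply, mul_smul_comm, smul_mul_assoc, ← smul_sum,
        ← smul_sub])

lemma gameForm_apply (g : Fin N × Fin N × Fin N → ℝ) (X Y Z : Matrix (Fin N) (Fin N) ℂ) :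
    gameForm g X Y Z =
      (∑ p, ∑ q, ((g p * g q : ℝ) : ℂ) * kron3 X Y Z p q) - (kron3 X Y Z).trace :=
  rfl

lemma sum_gameTensor_mul_kron3 (g : Fin N × Fin N × Fin N → ℝ)
    (X Y Z : Matrix (Fin N) (Fin N) ℂ) :
    ∑ p, ∑ q, ((gameTensor g p q : ℝ) : ℂ) * kron3 X Y Z p q =
      gameForm g X.offDiag Y.offDiag Z.offDiag := by
  have htrace : (kron3 X.offDiag Y.offDiag Z.offDiag).trace = 0 := by
    simp [Matrix.trace, kron3, Matrix.offDiag]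
  rw [gameForm_apply, htrace, sub_zero]
  refine sum_congr rfl fun p _ => sum_congr rfl fun q _ => ?_
  by_cases h₁ : p.1 = q.1 <;> by_cases h₂ : p.2.1 = q.2.1 <;> by_cases h₃ : p.2.2 = q.2.2 <;>
    simp [gameTensor, kron3, Matrix.offDiag, h₁, h₂, h₃]

end GameForm

lemma two_mul_sqrt_one_add_log_le {N : ℕ} (hN : 1 < N) :
    2 * √(1 + Real.log N) ≤ 4 * √(Real.log N) := by
  have hlog : Real.log 2 ≤ Real.log N := Real.log_le_log two_pos (by exact_mod_cast hN)
  have h4 : √(1 + Real.log N) ≤ √(4 * Real.log N) :=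
    Real.sqrt_le_sqrt (by linarith [Real.log_two_gt_d9])
  rw [Real.sqrt_mul zero_le_four, show (4 : ℝ) = 2 ^ 2 by norm_num,
    Real.sqrt_sq zero_le_two] at h4
  linarith

/-- If `M` bounds `|⟨g|X⊗Y⊗Z|g⟩ − Tr(X⊗Y⊗Z)|` over all triples of
normalized projectors, then `‖T‖_{2,2,2} ≤ 64 (ln N)^{3/2} · M`, i.e. for all Hermitian
`X, Y, Z` of Frobenius norm at most 1, `|⟨T, X⊗Y⊗Z⟩| ≤ 64 (ln N)^{3/2} · M`. -/
theorem trilinear_norm_le_projector_sup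
    (N : ℕ) (hN : 1 < N) (g : Fin N × Fin N × Fin N → ℝ) (M : ℝ)
    (hM : ∀ X Y Z : Matrix (Fin N) (Fin N) ℂ,
      IsNormalizedProjector X → IsNormalizedProjector Y → IsNormalizedProjector Z →
      ‖(∑ p, ∑ q, ((g p * g q : ℝ) : ℂ) * kron3 X Y Z p q)
        - (kron3 X Y Z).trace‖ ≤ M) :
    ∀ X Y Z : Matrix (Fin N) (Fin N) ℂ,
      X.IsHermitian → Y.IsHermitian → Z.IsHermitian →
      frobNorm X ≤ 1 → frobNorm Y ≤ 1 → frobNorm Z ≤ 1 →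
      ‖∑ p, ∑ q, ((gameTensor g p q : ℝ) : ℂ) * kron3 X Y Z p q‖ ≤
        64 * (Real.log N) ^ ((3 : ℝ) / 2) * M := by
  intro X Y Z hX hY hZ hfX hfY hfZ
  have : NeZero N := ⟨by omega⟩
  have hP := isNormalizedProjector_diagonal_indicator (univ_nonempty (α := Fin N))
  have hM0 : 0 ≤ M := (norm_nonneg _).trans (hM _ _ _ hP hP hP)
  have hdecomp : ∀ {A : Matrix (Fin N) (Fin N) ℂ}, A.IsHermitian → frobNorm A ≤ 1 →
      HasProjectorDecomp A.offDiag (4 * √(Real.log N)) := fun hA hfA =>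
    (hA.offDiag.hasProjectorDecomp ((frobNorm_offDiag_le _).trans hfA)).mono
      (two_mul_sqrt_one_add_log_le hN)
  rw [sum_gameTensor_mul_kron3]
  calc ‖gameForm g X.offDiag Y.offDiag Z.offDiag‖
      ≤ 4 * √(Real.log N) * (4 * √(Real.log N)) * (4 * √(Real.log N)) * M :=
        (hdecomp hX hfX).norm_trilinear_le (hdecomp hY hfY) (hdecomp hZ hfZ) _ hM hM0
    _ = 64 * √(Real.log N) ^ 3 * M := by ring
    _ = 64 * (Real.log N) ^ ((3 : ℝ) / 2) * M := by
        rw [Real.sqrt_eq_rpow, ← Real.rpow_natCast, ← Real.rpow_mul (Real.log_natCast_nonneg N)]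
        norm_num
end

section
/- Let M_1,…,M_Q be Hermitian matrices, C_1,…,C_Q be Hermitian unitary matrices, and |ψ⟩ a unit vector in the tensor product space. Then Σ_{k=1}^Q ⟨ψ| M_k ⊗ C_k |ψ⟩ ≤ √Q · max over unit vectors |φ⟩ and sign functions ζ : [Q] → {±1} of ⟨φ| Σ_k ζ(k) M_k ⊗ I |φ⟩. -/
/-!
Put `A k = M k ⊗ I` and `B k = I ⊗ C k`: `A k` is self-adjoint, `B k` is unitary and
`⟨ψ| M k ⊗ C k |ψ⟩ = ⟨A k ψ, B k ψ⟩`. Since `𝔼 ε k ε l = δ k l` for uniform random signs,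
`∑ k ⟨A k ψ, B k ψ⟩ = 𝔼 ⟨(∑ k ε k A k) ψ, (∑ k ε k B k) ψ⟩`. For a self-adjoint operator the norm
equals the numerical radius, which the hypothesis bounds by `c` for `∑ k ε k A k`; so Cauchy–Schwarz
bounds each term by `c ‖∑ k ε k B k ψ‖`, and a second Cauchy–Schwarz bounds the average of these
by `c (𝔼 ‖∑ k ε k B k ψ‖²)^½ = c (∑ k ‖B k ψ‖²)^½ = c √Q`.
-/

open Matrix

def IsSign {Q : ℕ} (ζ : Fin Q → ℝ) : Prop := ∀ k, ζ k = 1 ∨ ζ k = -1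

open Finset RCLike
open scoped InnerProductSpace Kronecker BigOperators

section Rademacher

variable {ι : Type*} [Fintype ι] [DecidableEq ι]

theorem sum_units_pi_mul_eq_zero {k l : ι} (hkl : k ≠ l) :
    ∑ ε : ι → ℤˣ, ((ε k * ε l : ℤˣ) : ℤ) = 0 := by
  let χ : (ι → ℤˣ) →* ℤ :=
    (Units.coeHom ℤ).comp (Pi.evalMonoidHom (fun _ => ℤˣ) k * Pi.evalMonoidHom _ l)
  refine sum_hom_units_eq_zero χ fun h => ?_
  have := DFunLike.congr_fun h (Pi.mulSingle k (-1))
  simp [χ, hkl.symm] at this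

theorem expect_units_pi_mul (𝕜 : Type*) [RCLike 𝕜] (k l : ι) :
    𝔼 ε : ι → ℤˣ, (((ε k * ε l : ℤˣ) : ℤ) : 𝕜) = if k = l then 1 else 0 := by
  split_ifs with h
  · simp [h, Int.units_mul_self]
  · rw [Fintype.expect_eq_sum_div_card, ← Int.cast_sum, sum_units_pi_mul_eq_zero h]
    simp

end Rademacher

theorem RCLike.re_expect {𝕜 ι : Type*} [RCLike 𝕜] (s : Finset ι) (f : ι → 𝕜) :
    re (𝔼 i ∈ s, f i) = 𝔼 i ∈ s, re (f i) :=
  map_expect (reLm.restrictScalars ℚ≥0) f s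

section SignedSum

variable {ι : Type*} [Fintype ι] {M : Type*} [AddCommGroup M]

-- Sign vectors are modelled as `ι → ℤˣ`, acting through `ℤˣ = {1, -1} ⊆ ℤ`.
def signedSum (ε : ι → ℤˣ) (a : ι → M) : M := ∑ k, (ε k : ℤ) • a k

theorem signedSum_neg (ε : ι → ℤˣ) (a : ι → M) : signedSum (-ε) a = -signedSum ε a := by
  simp [signedSum, neg_smul]

variable {𝕜 E : Type*} [RCLike 𝕜] [NormedAddCommGroup E] [InnerProductSpace 𝕜 E]

theorem inner_signedSum_left (ε : ι → ℤˣ) (a : ι → E) (x : E) :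
    ⟪signedSum ε a, x⟫_𝕜 = ∑ k, ((ε k : ℤ) : 𝕜) * ⟪a k, x⟫_𝕜 := by
  simp [signedSum, sum_inner, ← Int.cast_smul_eq_zsmul 𝕜, inner_smul_left]

theorem inner_signedSum_right (ε : ι → ℤˣ) (x : E) (a : ι → E) :
    ⟪x, signedSum ε a⟫_𝕜 = ∑ k, ((ε k : ℤ) : 𝕜) * ⟪x, a k⟫_𝕜 := by
  simp [signedSum, inner_sum, ← Int.cast_smul_eq_zsmul 𝕜, inner_smul_right]

theorem inner_signedSum_signedSum (ε : ι → ℤˣ) (a b : ι → E) :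
    ⟪signedSum ε a, signedSum ε b⟫_𝕜 =
      ∑ k, ∑ l, (((ε k * ε l : ℤˣ) : ℤ) : 𝕜) * ⟪a k, b l⟫_𝕜 := by
  rw [inner_signedSum_left]
  simp only [inner_signedSum_right, mul_sum, Units.val_mul, Int.cast_mul, mul_assoc]

theorem expect_inner_signedSum [DecidableEq ι] (a b : ι → E) :
    𝔼 ε : ι → ℤˣ, ⟪signedSum ε a, signedSum ε b⟫_𝕜 = ∑ k, ⟪a k, b k⟫_𝕜 := by
  simp_rw [inner_signedSum_signedSum, expect_sum_comm, ← expect_mul, expect_units_pi_mul,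
    ite_mul, one_mul, zero_mul, sum_ite_eq, mem_univ, if_true]

end SignedSum

theorem expect_norm_signedSum_sq (𝕜 : Type*) {ι E : Type*} [Fintype ι] [DecidableEq ι]
    [RCLike 𝕜] [NormedAddCommGroup E] [InnerProductSpace 𝕜 E] (b : ι → E) :
    𝔼 ε : ι → ℤˣ, ‖signedSum ε b‖ ^ 2 = ∑ k, ‖b k‖ ^ 2 := by
  have := congrArg re (expect_inner_signedSum (𝕜 := 𝕜) b b)
  simpa only [re_expect, map_sum, inner_self_eq_norm_sq] using this

theorem Finset.expect_le_sqrt_expect_sq {ι : Type*} (s : Finset ι) (f : ι → ℝ) :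
    𝔼 i ∈ s, f i ≤ √(𝔼 i ∈ s, f i ^ 2) := by
  rcases s.eq_empty_or_nonempty with rfl | hs
  · simp
  · refine Real.le_sqrt_of_sq_le ?_
    simpa [expect_const hs] using expect_mul_sq_le_sq_mul_sq s f 1

theorem re_sum_inner_le_mul_sqrt {ι 𝕜 E : Type*} [Fintype ι] [RCLike 𝕜] [NormedAddCommGroup E]
    [InnerProductSpace 𝕜 E] (a b : ι → E) {c : ℝ} (hc : ∀ ε : ι → ℤˣ, ‖signedSum ε a‖ ≤ c) :
    re (∑ k, ⟪a k, b k⟫_𝕜) ≤ c * √(∑ k, ‖b k‖ ^ 2) := by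
  classical
  have hc0 : 0 ≤ c := (norm_nonneg _).trans (hc 1)
  calc re (∑ k, ⟪a k, b k⟫_𝕜)
      = 𝔼 ε : ι → ℤˣ, re ⟪signedSum ε a, signedSum ε b⟫_𝕜 := by
        rw [← expect_inner_signedSum, re_expect]
    _ ≤ 𝔼 ε : ι → ℤˣ, c * ‖signedSum ε b‖ :=
        expect_le_expect fun ε _ => (re_inner_le_norm _ _).trans <|
          mul_le_mul_of_nonneg_right (hc ε) (norm_nonneg _)
    _ = c * 𝔼 ε : ι → ℤˣ, ‖signedSum ε b‖ := by rw [mul_expect]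
    _ ≤ c * √(𝔼 ε : ι → ℤˣ, ‖signedSum ε b‖ ^ 2) := by
        gcongr; exact expect_le_sqrt_expect_sq _ _
    _ = c * √(∑ k, ‖b k‖ ^ 2) := by rw [expect_norm_signedSum_sq 𝕜]

theorem ContinuousLinearMap.signedSum_apply {ι 𝕜 E : Type*} [Fintype ι] [RCLike 𝕜]
    [NormedAddCommGroup E] [InnerProductSpace 𝕜 E] (ε : ι → ℤˣ) (A : ι → E →L[𝕜] E) (x : E) :
    signedSum ε A x = signedSum ε fun k => A k x := by
  simp [signedSum]

section Operators

variable {𝕜 E : Type*} [RCLike 𝕜] [NormedAddCommGroup E] [InnerProductSpace 𝕜 E] [CompleteSpace E]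

theorem IsSelfAdjoint.signedSum {ι : Type*} [Fintype ι] (ε : ι → ℤˣ) {A : ι → E →L[𝕜] E}
    (hA : ∀ k, IsSelfAdjoint (A k)) : IsSelfAdjoint (signedSum ε A) :=
  (selfAdjoint _).sum_mem fun k _ => (selfAdjoint _).zsmul_mem (hA k) _

theorem IsSelfAdjoint.norm_le_of_abs_re_inner_self_le {T : E →L[𝕜] E}
    (hT : IsSelfAdjoint T) {c : ℝ} (hc0 : 0 ≤ c)
    (hc : ∀ x : E, ‖x‖ = 1 → |re ⟪T x, x⟫_𝕜| ≤ c) : ‖T‖ ≤ c := by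
  rw [T.norm_eq_iSup_rayleighQuotient hT.isSymmetric]
  refine ciSup_le fun x => ?_
  rcases eq_or_ne x 0 with rfl | hx
  · simpa using hc0
  · have hx' : (‖x‖⁻¹ : 𝕜) ≠ 0 := by simpa using hx
    have hu := norm_smul_inv_norm (𝕜 := 𝕜) hx
    rw [← T.rayleigh_smul x hx']
    simpa [ContinuousLinearMap.rayleighQuotient, ContinuousLinearMap.reApplyInnerSelf_apply, hu]
      using hc _ hu

theorem re_sum_inner_mul_apply_le {ι : Type*} [Fintype ι] (A B : ι → E →L[𝕜] E)
    (hA : ∀ k, IsSelfAdjoint (A k)) (hB : ∀ k, B k ∈ unitary (E →L[𝕜] E)) {x : E}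
    (hx : ‖x‖ = 1) {c : ℝ}
    (hc : ∀ (ε : ι → ℤˣ) (y : E), ‖y‖ = 1 → re ⟪y, signedSum ε A y⟫_𝕜 ≤ c) :
    re (∑ k, ⟪x, (A k * B k) x⟫_𝕜) ≤ √(Fintype.card ι) * c := by
  have habs (ε : ι → ℤˣ) (y : E) (hy : ‖y‖ = 1) : |re ⟪signedSum ε A y, y⟫_𝕜| ≤ c := by
    have hneg := hc (-ε) y hy
    rw [signedSum_neg, _root_.neg_apply, inner_neg_right, map_neg] at hneg
    rw [abs_le, inner_re_symm]
    exact ⟨by linarith, hc ε y hy⟩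
  have hc0 : 0 ≤ c := (abs_nonneg _).trans (habs 1 x hx)
  have hnorm (ε : ι → ℤˣ) : ‖signedSum ε fun k => A k x‖ ≤ c := by
    rw [← ContinuousLinearMap.signedSum_apply]
    calc ‖signedSum ε A x‖ ≤ ‖signedSum ε A‖ * ‖x‖ := (signedSum ε A).le_opNorm x
      _ ≤ c := by
        rw [hx, mul_one]
        exact (IsSelfAdjoint.signedSum ε hA).norm_le_of_abs_re_inner_self_le hc0 (habs ε)
  have key := re_sum_inner_le_mul_sqrt (𝕜 := 𝕜) (fun k => A k x) (fun k => B k x) hnorm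
  simp only [ContinuousLinearMap.norm_map_of_mem_unitary (hB _), hx, one_pow, sum_const,
    card_univ, nsmul_eq_mul, mul_one] at key
  have hsymm (k : ι) : ⟪A k x, B k x⟫_𝕜 = ⟪x, (A k * B k) x⟫_𝕜 := (hA k).isSymmetric x (B k x)
  simpa only [hsymm, mul_comm c] using key

end Operators

theorem Matrix.inner_toEuclideanCLM_eq_sum {𝕜 n : Type*} [RCLike 𝕜] [Fintype n] [DecidableEq n]
    (X : Matrix n n 𝕜) (u v : EuclideanSpace 𝕜 n) :
    ⟪u, toEuclideanCLM (𝕜 := 𝕜) X v⟫_𝕜 = ∑ p, ∑ q, starRingEnd 𝕜 (u p) * X p q * v q := by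
  simp only [EuclideanSpace.inner_eq_star_dotProduct, ofLp_toEuclideanCLM, dotProduct, mulVec,
    sum_mul, Pi.star_apply, RCLike.star_def]
  exact sum_congr rfl fun p _ => sum_congr rfl fun q _ => by ring

theorem Matrix.IsHermitian.kronecker {R m n : Type*} [CommSemiring R] [StarRing R]
    {A : Matrix m m R} {B : Matrix n n R} (hA : A.IsHermitian) (hB : B.IsHermitian) :
    (A ⊗ₖ B).IsHermitian := by
  rw [IsHermitian, conjTranspose_kronecker, hA.eq, hB.eq]

theorem Matrix.mem_unitary_of_isHermitian_of_mul_self_eq_one {R n : Type*} [Fintype n]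
    [DecidableEq n] [Semiring R] [StarRing R] {U : Matrix n n R} (hU : U.IsHermitian)
    (hUU : U * U = 1) : U ∈ unitary (Matrix n n R) := by
  rw [Unitary.mem_iff, star_eq_conjTranspose, hU.eq]
  exact ⟨hUU, hUU⟩

theorem isSign_units {Q : ℕ} (ε : Fin Q → ℤˣ) : IsSign fun k => ((ε k : ℤ) : ℝ) := fun k => by
  rcases Int.units_eq_one_or (ε k) with h | h <;> simp [h]

/-- Decoupling lemma: for Hermitian `M k`, Hermitian unitary `C k` and a
unit vector `ψ` in the tensor product space,
`∑ k ⟨ψ|M k ⊗ C k|ψ⟩ ≤ √Q · max_{φ, ζ} ⟨φ|∑ k ζ k · (M k ⊗ I)|φ⟩`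
(the maximum over unit vectors `φ` and signs `ζ` is expressed via an arbitrary upper
bound `c`). -/
theorem decoupling_third_player
    (Q D d : ℕ) (M : Fin Q → Matrix (Fin D) (Fin D) ℂ)
    (hM : ∀ k, (M k).IsHermitian)
    (C : Fin Q → Matrix (Fin d) (Fin d) ℂ)
    (hCherm : ∀ k, (C k).IsHermitian) (hCunit : ∀ k, C k * C k = 1)
    (ψ : Fin D × Fin d → ℂ) (hψ : (∑ p, Complex.normSq (ψ p)) = 1)
    (c : ℝ)
    (hc : ∀ φ : Fin D × Fin d → ℂ, (∑ p, Complex.normSq (φ p)) = 1 →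
      ∀ ζ : Fin Q → ℝ, IsSign ζ →
        (∑ k, (ζ k : ℂ) * ∑ p, ∑ q, (starRingEnd ℂ) (φ p) *
          (M k p.1 q.1 * (if p.2 = q.2 then 1 else 0)) * φ q).re ≤ c) :
    (∑ k, ∑ p, ∑ q, (starRingEnd ℂ) (ψ p) *
        (M k p.1 q.1 * C k p.2 q.2) * ψ q).re ≤ Real.sqrt Q * c := by
  have hnormSq (φ : EuclideanSpace ℂ (Fin D × Fin d)) :
      ∑ p, Complex.normSq (φ p) = ‖φ‖ ^ 2 := by
    simp [EuclideanSpace.norm_sq_eq, Complex.normSq_eq_norm_sq]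
  let A (k : Fin Q) := toEuclideanCLM (𝕜 := ℂ) (M k ⊗ₖ (1 : Matrix (Fin d) (Fin d) ℂ))
  let B (k : Fin Q) := toEuclideanCLM (𝕜 := ℂ) ((1 : Matrix (Fin D) (Fin D) ℂ) ⊗ₖ C k)
  have hA (k : Fin Q) : IsSelfAdjoint (A k) :=
    ((hM k).kronecker isHermitian_one).isSelfAdjoint.map _
  have hB (k : Fin Q) : B k ∈ unitary _ := Unitary.map_mem _ <| kronecker_mem_unitary
    (one_mem _) (mem_unitary_of_isHermitian_of_mul_self_eq_one (hCherm k) (hCunit k))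
  have hform (ε : Fin Q → ℤˣ) (φ : EuclideanSpace ℂ (Fin D × Fin d)) (hφ : ‖φ‖ = 1) :
      re ⟪φ, signedSum ε A φ⟫_ℂ ≤ c := by
    have := hc φ.ofLp (by rw [hnormSq φ, hφ, one_pow]) _ (isSign_units ε)
    rw [ContinuousLinearMap.signedSum_apply, inner_signedSum_right, re_to_complex]
    convert this using 3 with k
    rw [Complex.ofReal_intCast, inner_toEuclideanCLM_eq_sum]
    rfl
  have hAB (k : Fin Q) : A k * B k = toEuclideanCLM (𝕜 := ℂ) (M k ⊗ₖ C k) := by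
    rw [← map_mul, ← mul_kronecker_mul, mul_one, one_mul]
  have key := re_sum_inner_mul_apply_le A B hA hB (x := WithLp.toLp 2 ψ)
    (by rw [← pow_eq_one_iff_of_nonneg (norm_nonneg _) two_ne_zero, ← hnormSq]; exact hψ) hform
  simp only [hAB, inner_toEuclideanCLM_eq_sum, re_to_complex, Fintype.card_fin] at key
  exact key
end
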